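/- arXiv:1804.03490 — 7 statements merged into one kernel-verified Lean document; each statement's English description precedes it below -/
import Mathlib

section
/- For p in (1,∞), the value π_p := 2∫₀¹ (1-t^p)^{-1/p} dt equals 2π/(p·sin(π/p)). -/
open Real MeasureTheory Set

lemma beta_real {a : ℝ} (ha : 0 < a) (ha1 : a < 1) :
    ∫ t in (0:ℝ)..1, t ^ (a - 1) * (1 - t) ^ (-a) = π / Real.sin (π * a) := by
  have key : ((∫ t in (0:ℝ)..1, t ^ (a - 1) * (1 - t) ^ (-a) : ℝ) : ℂ)
      = Complex.betaIntegral a (1 - a) := by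
    rw [Complex.betaIntegral, ← intervalIntegral.integral_ofReal]
    apply intervalIntegral.integral_congr
    intro x hx
    rw [uIcc_of_le (by norm_num : (0:ℝ) ≤ 1)] at hx
    have hx0 : (0:ℝ) ≤ x := hx.1
    have hx1 : (0:ℝ) ≤ 1 - x := by linarith [hx.2]
    push_cast
    rw [Complex.ofReal_cpow hx0, Complex.ofReal_cpow hx1]
    push_cast
    ring_nf
  have hb : Complex.betaIntegral a (1 - a)
      = Complex.Gamma a * Complex.Gamma (1 - a) := by
    have h := Complex.Gamma_mul_Gamma_eq_betaIntegral
      (s := (a : ℂ)) (t := ((1 - a : ℝ) : ℂ)) (by simpa using ha)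
      (by simpa using by linarith : 0 < Complex.re ((1 - a : ℝ) : ℂ))
    have h1 : ((a : ℂ) + ((1 - a : ℝ) : ℂ)) = 1 := by push_cast; ring
    rw [h1, Complex.Gamma_one, one_mul] at h
    push_cast at h ⊢
    rw [← h]
  have hR : (Complex.Gamma a * Complex.Gamma (1 - a) : ℂ)
      = ((π / Real.sin (π * a) : ℝ) : ℂ) := by
    have h2 : (1 : ℂ) - (a : ℂ) = ((1 - a : ℝ) : ℂ) := by push_cast; ring
    rw [h2, Complex.Gamma_ofReal, Complex.Gamma_ofReal,
      ← Complex.ofReal_mul, Real.Gamma_mul_Gamma_one_sub]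
  have := key.trans (hb.trans hR)
  exact_mod_cast this

lemma subst_rpow (p : ℝ) (hp : 1 < p) :
    ∫ t in (0:ℝ)..1, (1 - t ^ p) ^ (-(1/p) : ℝ)
      = (1/p) * ∫ y in (0:ℝ)..1, y ^ (1/p - 1) * (1 - y) ^ (-(1/p) : ℝ) := by
  have hp0 : 0 < p := by linarith
  set g : ℝ → ℝ := Set.indicator (Ioo (0:ℝ) 1)
    (fun y => (1/p) * (y ^ (1/p - 1) * (1 - y) ^ (-(1/p) : ℝ))) with hg
  have key := integral_comp_rpow_Ioi_of_pos (g := g) hp0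
  have hL : (∫ x in Ioi (0:ℝ), (p * x ^ (p - 1)) • g (x ^ p))
      = ∫ x in Ioo (0:ℝ) 1, (1 - x ^ p) ^ (-(1/p) : ℝ) := by
    have step : (∫ x in Ioi (0:ℝ), (p * x ^ (p - 1)) • g (x ^ p))
        = ∫ x in Ioi (0:ℝ),
            Set.indicator (Ioo (0:ℝ) 1) (fun x => (1 - x ^ p) ^ (-(1/p) : ℝ)) x := by
      apply setIntegral_congr_fun measurableSet_Ioi
      intro x hx
      have hx0 : 0 < x := hx
      by_cases hx1 : x < 1
      · have hmem : x ^ p ∈ Ioo (0:ℝ) 1 :=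
          ⟨rpow_pos_of_pos hx0 p, rpow_lt_one hx0.le hx1 hp0⟩
        have hmem' : x ∈ Ioo (0:ℝ) 1 := ⟨hx0, hx1⟩
        rw [hg]; dsimp only; rw [Set.indicator_of_mem hmem, Set.indicator_of_mem hmem', smul_eq_mul]
        have h1 : (x ^ p) ^ (1/p - 1 : ℝ) = x ^ (1 - p) := by
          rw [← rpow_mul hx0.le]
          congr 1
          field_simp
        rw [h1]
        have h2 : x ^ (p - 1) * x ^ (1 - p) = 1 := by
          rw [← rpow_add hx0]; norm_num
        calc p * x ^ (p - 1) * ((1/p) * (x ^ (1 - p) * (1 - x ^ p) ^ (-(1/p) : ℝ)))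
            = (p * (1/p)) * (x ^ (p - 1) * x ^ (1 - p)) * (1 - x ^ p) ^ (-(1/p) : ℝ) := by ring
          _ = (1 - x ^ p) ^ (-(1/p) : ℝ) := by
              rw [h2, mul_one_div_cancel hp0.ne']; ring
      · have hge : (1:ℝ) ≤ x := not_lt.mp hx1
        have hge' : (1:ℝ) ≤ x ^ p := one_le_rpow hge hp0.le
        have h1 : x ^ p ∉ Ioo (0:ℝ) 1 := fun h => absurd h.2 (not_lt.mpr hge')
        have h2 : x ∉ Ioo (0:ℝ) 1 := fun h => absurd h.2 (not_lt.mpr hge)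
        rw [hg]; dsimp only; rw [Set.indicator_of_notMem h1, Set.indicator_of_notMem h2, smul_zero]
    rw [step, setIntegral_indicator measurableSet_Ioo]
    congr 1
    rw [Set.inter_eq_right.mpr (Ioo_subset_Ioi_self)]
  have hR : (∫ y in Ioi (0:ℝ), g y)
      = ∫ y in Ioo (0:ℝ) 1, (1/p) * (y ^ (1/p - 1) * (1 - y) ^ (-(1/p) : ℝ)) := by
    rw [hg, setIntegral_indicator measurableSet_Ioo]
    congr 1
    rw [Set.inter_eq_right.mpr (Ioo_subset_Ioi_self)]
  rw [intervalIntegral.integral_of_le (by norm_num : (0:ℝ) ≤ 1),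
    intervalIntegral.integral_of_le (by norm_num : (0:ℝ) ≤ 1),
    integral_Ioc_eq_integral_Ioo, integral_Ioc_eq_integral_Ioo,
    ← hL, key, hR, ← integral_const_mul]

theorem pi_p_eq (p : ℝ) (hp : 1 < p) :
    2 * ∫ t in (0:ℝ)..1, (1 - t ^ p) ^ (-(1/p) : ℝ) =
      2 * π / (p * Real.sin (π / p)) := by
  have hp0 : 0 < p := by linarith
  have ha : 0 < 1/p := by positivity
  have ha1 : 1/p < 1 := by
    rw [div_lt_one hp0]; linarith
  rw [subst_rpow p hp, beta_real ha ha1, mul_one_div π p]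
  ring
end

section
/- For p ∈ (1,∞) and x ∈ (0, π_p/2], the p-Jordan inequality holds: 2/π_p ≤ sin_p(x)/x < 1. -/
open Real

noncomputable def pi_p (p : ℝ) : ℝ := 2 * π / (p * Real.sin (π / p))

noncomputable def Fp (p y : ℝ) : ℝ := ∫ t in (0:ℝ)..y, (1 - t ^ p) ^ (-(1/p) : ℝ)

open MeasureTheory intervalIntegral Set Filter

namespace PJordan

variable {p : ℝ}

/-- The integrand. -/
noncomputable def g (p t : ℝ) : ℝ := (1 - t ^ p) ^ (-(1/p) : ℝ)

lemma Fp_eq (p y : ℝ) : Fp p y = ∫ t in (0:ℝ)..y, g p t := rfl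

lemma g_mono (hp : 1 < p) {s t : ℝ} (hs : 0 ≤ s) (hst : s ≤ t) (ht : t < 1) :
    g p s ≤ g p t := by
  have h1 : t ^ p < 1 := Real.rpow_lt_one (hs.trans hst) ht (by linarith)
  have h2 : s ^ p ≤ t ^ p := Real.rpow_le_rpow hs hst (by linarith)
  exact Real.rpow_le_rpow_of_nonpos (by linarith) (by linarith)
    (by rw [neg_nonpos]; positivity)

lemma g_ge_one (hp : 1 < p) {t : ℝ} (h0 : 0 ≤ t) (h1 : t < 1) : 1 ≤ g p t := by
  have h2 : t ^ p < 1 := Real.rpow_lt_one h0 h1 (by linarith)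
  have h3 : 0 ≤ t ^ p := Real.rpow_nonneg h0 p
  exact Real.one_le_rpow_of_pos_of_le_one_of_nonpos (by linarith) (by linarith)
    (by rw [neg_nonpos]; positivity)

lemma g_gt_one (hp : 1 < p) {t : ℝ} (h0 : 0 < t) (h1 : t < 1) : 1 < g p t := by
  have h2 : t ^ p < 1 := Real.rpow_lt_one h0.le h1 (by linarith)
  have h3 : 0 < t ^ p := Real.rpow_pos_of_pos h0 p
  exact Real.one_lt_rpow_of_pos_of_lt_one_of_neg (by linarith) (by linarith)
    (by rw [neg_lt_zero]; positivity)

lemma g_nonneg (hp : 1 < p) {t : ℝ} (h0 : 0 ≤ t) (h1 : t ≤ 1) : 0 ≤ g p t := by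
  have h2 : t ^ p ≤ 1 := Real.rpow_le_one h0 h1 (by linarith)
  exact Real.rpow_nonneg (by linarith) _

lemma g_contAt (hp : 1 < p) {t : ℝ} (ht0 : 0 < t) (ht1 : t < 1) :
    ContinuousAt (g p) t := by
  have h1 : t ^ p < 1 := Real.rpow_lt_one ht0.le ht1 (by linarith)
  have hbase : ContinuousAt (fun t : ℝ => 1 - t ^ p) t :=
    continuousAt_const.sub (Real.continuousAt_rpow_const t p (Or.inr (by linarith)))
  have hne : (1:ℝ) - t ^ p ≠ 0 := ne_of_gt (by linarith)
  exact hbase.rpow_const (Or.inl hne)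

lemma g_aesm (hp : 1 < p) {a b : ℝ} (hab : 0 ≤ a) (hb : b ≤ 1) (h : a ≤ b) :
    AEStronglyMeasurable (g p) (volume.restrict (Set.Ioc a b)) := by
  have hr : (volume : Measure ℝ).restrict (Set.Ioc a b)
      = volume.restrict (Set.Ioo a b) :=
    (Measure.restrict_congr_set Ioo_ae_eq_Ioc).symm
  rw [hr]
  have hcont : ContinuousOn (g p) (Set.Ioo a b) := fun t ht =>
    (g_contAt hp (lt_of_le_of_lt hab ht.1) (lt_of_lt_of_le ht.2 hb)).continuousWithinAt
  exact (hcont.aestronglyMeasurable measurableSet_Ioo)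

lemma g_intble (hp : 1 < p) : IntervalIntegrable (g p) volume 0 1 := by
  have hq0 : (0:ℝ) < 1/p := by positivity
  have hq1 : (1:ℝ)/p < 1 := by rw [div_lt_one (by linarith)]; linarith
  have hmaj : IntervalIntegrable (fun t : ℝ => (1 - t) ^ (-(1/p) : ℝ)) volume 0 1 := by
    have h := (intervalIntegrable_rpow' (a := (0:ℝ)) (b := 1) (r := -(1/p))
      (by linarith)).comp_sub_left 1
    simpa using h.symm
  refine hmaj.mono_fun ?_ ?_
  · rw [uIoc_of_le (by norm_num : (0:ℝ) ≤ 1)]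
    exact g_aesm hp le_rfl le_rfl zero_le_one
  · rw [uIoc_of_le (by norm_num : (0:ℝ) ≤ 1)]
    refine (ae_restrict_iff' measurableSet_Ioc).2 (Filter.Eventually.of_forall ?_)
    intro t ht
    show ‖g p t‖ ≤ ‖(1 - t) ^ (-(1/p) : ℝ)‖
    have ht0 : 0 < t := ht.1
    have ht1 : t ≤ 1 := ht.2
    have htp : t ^ p ≤ t := by
      calc t ^ p ≤ t ^ (1:ℝ) := Real.rpow_le_rpow_of_exponent_ge ht0 ht1 hp.le
      _ = t := Real.rpow_one t
    have h1 : (0:ℝ) ≤ 1 - t := by linarith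
    rw [Real.norm_of_nonneg (g_nonneg hp ht0.le ht1),
      Real.norm_of_nonneg (Real.rpow_nonneg h1 _)]
    rcases eq_or_lt_of_le ht1 with h | h
    · subst h
      simp [g, Real.one_rpow]
    · exact Real.rpow_le_rpow_of_nonpos (by linarith) (by linarith)
        (by rw [neg_nonpos]; positivity)

lemma g_intble' (hp : 1 < p) {a b : ℝ} (ha : 0 ≤ a) (hb : b ≤ 1) (hab : a ≤ b) :
    IntervalIntegrable (g p) volume a b := by
  refine (g_intble hp).mono_set ?_
  rw [uIcc_of_le hab, uIcc_of_le (by norm_num : (0:ℝ) ≤ 1)]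
  exact Icc_subset_Icc ha hb

/-- strict lower bound : `y < Fp p y` for `y ∈ (0,1]`. -/
lemma lt_Fp (hp : 1 < p) {y : ℝ} (hy0 : 0 < y) (hy1 : y ≤ 1) : y < Fp p y := by
  have hint1 : IntervalIntegrable (g p) volume 0 (y/2) := g_intble' hp le_rfl (by linarith) (by linarith)
  have hint2 : IntervalIntegrable (g p) volume (y/2) y := g_intble' hp (by linarith) hy1 (by linarith)
  have hsplit : Fp p y = (∫ t in (0:ℝ)..(y/2), g p t) + ∫ t in (y/2)..y, g p t := by
    rw [Fp_eq, integral_add_adjacent_intervals hint1 hint2]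
  have hA : y/2 ≤ ∫ t in (0:ℝ)..(y/2), g p t := by
    have h := integral_mono_on (f := fun _ => (1:ℝ)) (g := g p) (μ := volume)
      (by linarith : (0:ℝ) ≤ y/2) intervalIntegrable_const hint1
      (fun t htt => g_ge_one hp htt.1 (by rcases htt with ⟨h1, h2⟩; linarith))
    simpa using h
  have hc : 1 < g p (y/2) := g_gt_one hp (by linarith) (by linarith)
  have hB : (y - y/2) * g p (y/2) ≤ ∫ t in (y/2)..y, g p t := by
    have hne : ∀ᵐ t : ℝ ∂volume, t ≠ 1 := by
      refine MeasureTheory.ae_iff.2 ?_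
      simpa using measure_singleton (1:ℝ)
    have hae : (fun _ => g p (y/2)) ≤ᵐ[volume.restrict (Set.Icc (y/2) y)] g p := by
      refine (ae_restrict_iff' measurableSet_Icc).2 ?_
      filter_upwards [hne] with t ht hmem
      exact g_mono hp (by linarith) hmem.1 (lt_of_le_of_ne (hmem.2.trans hy1) ht)
    have h := integral_mono_ae_restrict (f := fun _ => g p (y/2)) (g := g p) (μ := volume)
      (by linarith : y/2 ≤ y) intervalIntegrable_const hint2 hae
    simpa [smul_eq_mul] using h
  rw [hsplit]
  nlinarith [hA, hB, hc, hy0]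

/-- convexity-type upper bound : `Fp p y ≤ y * Fp p 1` for `y ∈ (0,1]`. -/
lemma Fp_le (hp : 1 < p) {y : ℝ} (hy0 : 0 < y) (hy1 : y ≤ 1) : Fp p y ≤ y * Fp p 1 := by
  rcases eq_or_lt_of_le hy1 with h | hy1'
  · subst h; rw [one_mul]
  have hint1 : IntervalIntegrable (g p) volume 0 y := g_intble' hp le_rfl hy1 hy0.le
  have hint2 : IntervalIntegrable (g p) volume y 1 := g_intble' hp hy0.le le_rfl hy1
  have h1 : Fp p y ≤ y * g p y := by
    have h := integral_mono_on (f := g p) (g := fun _ => g p y) (μ := volume)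
      hy0.le hint1 intervalIntegrable_const
      (fun t htt => g_mono hp htt.1 htt.2 hy1')
    rw [Fp_eq]
    simpa [smul_eq_mul] using h
  have h2 : (1 - y) * g p y ≤ ∫ t in y..1, g p t := by
    have hne : ∀ᵐ t : ℝ ∂volume, t ≠ 1 := by
      refine MeasureTheory.ae_iff.2 ?_
      simpa using measure_singleton (1:ℝ)
    have hae : (fun _ => g p y) ≤ᵐ[volume.restrict (Set.Icc y 1)] g p := by
      refine (ae_restrict_iff' measurableSet_Icc).2 ?_
      filter_upwards [hne] with t ht hmem
      exact g_mono hp hy0.le hmem.1 (lt_of_le_of_ne hmem.2 ht)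
    have h := integral_mono_ae_restrict (f := fun _ => g p y) (g := g p) (μ := volume)
      hy1 intervalIntegrable_const hint2 hae
    simpa [smul_eq_mul] using h
  have h3 : Fp p 1 = Fp p y + ∫ t in y..1, g p t := by
    rw [Fp_eq, Fp_eq, integral_add_adjacent_intervals hint1 hint2]
  nlinarith [h1, h2, h3, hy0, hy1']

lemma subst_pt (hp : 1 < p) {u : ℝ} (hu : 0 ≤ u) :
    ((1/p) * u ^ (1/p - 1 : ℝ)) • g p (u ^ (1/p : ℝ))
      = (1/p) * (u ^ (1/p - 1 : ℝ) * (1 - u) ^ (-(1/p) : ℝ)) := by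
  have hup : (u ^ (1/p : ℝ)) ^ p = u := by
    rw [← Real.rpow_mul hu]
    have h : (1/p) * p = 1 := by field_simp
    rw [h, Real.rpow_one]
  simp only [g, hup, smul_eq_mul, mul_assoc]

/-- The value `Fp p 1 = pi_p p / 2`. -/
lemma Fp_one (hp : 1 < p) : Fp p 1 = pi_p p / 2 := by
  have hp0 : (0:ℝ) < p := by linarith
  have hq0 : (0:ℝ) < 1/p := by positivity
  have hq1 : (1:ℝ)/p < 1 := by rw [div_lt_one hp0]; linarith
  set J : ℝ → ℝ := fun x => x ^ (1/p - 1 : ℝ) * (1 - x) ^ (-(1/p) : ℝ) with hJdef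
  -- pointwise identification of the complex Beta integrand with `J`
  have hpt : ∀ x ∈ Set.Icc (0:ℝ) 1,
      (x:ℂ) ^ (((1/p : ℝ):ℂ) - 1) * ((1:ℂ) - (x:ℂ)) ^ ((((1 - 1/p : ℝ)):ℂ) - 1)
        = ((J x : ℝ) : ℂ) := by
    intro x hx
    have h1 : (((1/p : ℝ):ℂ) - 1) = ((1/p - 1 : ℝ) : ℂ) := by push_cast; ring
    have h2 : ((((1 - 1/p : ℝ)):ℂ) - 1) = ((-(1/p) : ℝ) : ℂ) := by push_cast; ring
    have h3 : ((1:ℂ) - (x:ℂ)) = ((1 - x : ℝ) : ℂ) := by push_cast; ring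
    rw [h1, h2, h3, ← Complex.ofReal_cpow hx.1 _,
      ← Complex.ofReal_cpow (by linarith [hx.2] : (0:ℝ) ≤ 1 - x) _, ← Complex.ofReal_mul]
  have hu : 0 < (((1/p : ℝ):ℂ)).re := by simpa using hq0
  have hv : 0 < ((((1 - 1/p : ℝ)):ℂ)).re := by
    simpa using (by linarith : (0:ℝ) < 1 - 1/p)
  -- value of the complex Beta integral via the reflection formula
  have hBval : Complex.betaIntegral ((1/p : ℝ):ℂ) (((1 - 1/p : ℝ)):ℂ)
      = ((π / Real.sin (π * (1/p)) : ℝ) : ℂ) := by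
    have h := Complex.Gamma_mul_Gamma_eq_betaIntegral hu hv
    have hsum : (((1/p : ℝ):ℂ)) + ((((1 - 1/p : ℝ)):ℂ)) = 1 := by push_cast; ring
    rw [hsum, Complex.Gamma_one, one_mul] at h
    rw [← h, Complex.Gamma_ofReal, Complex.Gamma_ofReal, ← Complex.ofReal_mul,
      Real.Gamma_mul_Gamma_one_sub]
  -- the complex Beta integral is the coercion of the real integral of `J`
  have hBreal : Complex.betaIntegral ((1/p : ℝ):ℂ) (((1 - 1/p : ℝ)):ℂ)
      = ((∫ x in (0:ℝ)..1, J x : ℝ) : ℂ) := by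
    rw [Complex.betaIntegral, ← intervalIntegral.integral_ofReal]
    refine intervalIntegral.integral_congr ?_
    intro x hx
    rw [uIcc_of_le (by norm_num : (0:ℝ) ≤ 1)] at hx
    exact hpt x hx
  have hI : (∫ x in (0:ℝ)..1, J x) = π / Real.sin (π * (1/p)) := by
    have h := hBreal.symm.trans hBval
    exact_mod_cast h
  -- integrability of `J`
  have hJint : IntervalIntegrable J volume 0 1 := by
    have hc := Complex.betaIntegral_convergent hu hv
    rw [intervalIntegrable_iff, uIoc_of_le (by norm_num : (0:ℝ) ≤ 1)] at hc ⊢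
    have hre := hc.re
    refine hre.congr ?_
    refine (ae_restrict_iff' measurableSet_Ioc).2 (Filter.Eventually.of_forall ?_)
    intro x hx
    have h := hpt x ⟨hx.1.le, hx.2⟩
    show RCLike.re ((x:ℂ) ^ (((1/p : ℝ):ℂ) - 1) * ((1:ℂ) - (x:ℂ)) ^ ((((1 - 1/p : ℝ)):ℂ) - 1))
      = J x
    rw [h]
    simp
  -- change of variables `t = u ^ (1/p)`
  have hsub : Fp p 1 = ∫ u in (0:ℝ)..1, ((1/p) * u ^ (1/p - 1 : ℝ)) • g p (u ^ (1/p : ℝ)) := by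
    have key := intervalIntegral.integral_comp_smul_deriv'''
      (f := fun u : ℝ => u ^ (1/p : ℝ)) (f' := fun u : ℝ => (1/p) * u ^ (1/p - 1 : ℝ))
      (g := g p) (a := (0:ℝ)) (b := 1)
      (fun u _ => (Real.continuousAt_rpow_const u (1/p) (Or.inr hq0.le)).continuousWithinAt)
      ?_ ?_ ?_ ?_
    · simp only [Real.zero_rpow hq0.ne', Real.one_rpow, Function.comp] at key
      rw [Fp_eq]
      exact key.symm
    · intro x hx
      rw [min_eq_left (by norm_num : (0:ℝ) ≤ 1), max_eq_right (by norm_num : (0:ℝ) ≤ 1)] at hx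
      exact (Real.hasDerivAt_rpow_const (p := (1/p : ℝ)) (Or.inl hx.1.ne')).hasDerivWithinAt
    · rw [min_eq_left (by norm_num : (0:ℝ) ≤ 1), max_eq_right (by norm_num : (0:ℝ) ≤ 1)]
      rintro t ⟨u, hu', rfl⟩
      exact (g_contAt hp (Real.rpow_pos_of_pos hu'.1 _)
        (Real.rpow_lt_one hu'.1.le hu'.2 hq0)).continuousWithinAt
    · refine MeasureTheory.IntegrableOn.mono_set
        ((intervalIntegrable_iff_integrableOn_Icc_of_le (by norm_num)).1 (g_intble hp)) ?_
      rintro t ⟨u, hu', rfl⟩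
      rw [uIcc_of_le (by norm_num : (0:ℝ) ≤ 1)] at hu'
      exact ⟨Real.rpow_nonneg hu'.1 _, Real.rpow_le_one hu'.1 hu'.2 hq0.le⟩
    · rw [uIcc_of_le (by norm_num : (0:ℝ) ≤ 1)]
      have hJ' : IntegrableOn (fun x => (1/p) * J x) (Set.Icc (0:ℝ) 1) volume :=
        (intervalIntegrable_iff_integrableOn_Icc_of_le (by norm_num)).1 (hJint.const_mul (1/p))
      refine hJ'.congr_fun ?_ measurableSet_Icc
      intro x hx
      have h := subst_pt hp hx.1
      simp only [Function.comp, hJdef] at h ⊢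
      rw [← h]
  have hfinal : (∫ u in (0:ℝ)..1, ((1/p) * u ^ (1/p - 1 : ℝ)) • g p (u ^ (1/p : ℝ)))
      = (1/p) * ∫ x in (0:ℝ)..1, J x := by
    rw [← intervalIntegral.integral_const_mul]
    refine intervalIntegral.integral_congr ?_
    intro u hu'
    rw [uIcc_of_le (by norm_num : (0:ℝ) ≤ 1)] at hu'
    exact subst_pt hp hu'.1
  have hs : Real.sin (π / p) ≠ 0 := by
    have h1 : 0 < π / p := by positivity
    have h2 : π / p < π := div_lt_self Real.pi_pos hp
    exact (Real.sin_pos_of_pos_of_lt_pi h1 h2).ne'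
  have hpi : π * (1/p) = π / p := by ring
  rw [hsub, hfinal, hI, hpi, pi_p]
  field_simp

end PJordan

theorem p_jordan_inequality (p : ℝ) (hp : 1 < p) (sinp : ℝ → ℝ)
    (hsin : ∀ x ∈ Set.Icc 0 (pi_p p / 2),
      sinp x ∈ Set.Icc (0:ℝ) 1 ∧ Fp p (sinp x) = x)
    (x : ℝ) (hx : x ∈ Set.Ioc 0 (pi_p p / 2)) :
    2 / pi_p p ≤ sinp x / x ∧ sinp x / x < 1 := by
  obtain ⟨hx0, hx2⟩ := hx
  obtain ⟨⟨hy0, hy1⟩, hFy⟩ := hsin x ⟨hx0.le, hx2⟩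
  set y := sinp x with hy
  have hy0' : 0 < y := by
    rcases eq_or_lt_of_le hy0 with h | h
    · exfalso
      rw [← h] at hFy
      rw [Fp, intervalIntegral.integral_same] at hFy
      linarith
    · exact h
  have hyx : y < x := by
    rw [← hFy]; exact PJordan.lt_Fp hp hy0' hy1
  have hP : Fp p 1 = pi_p p / 2 := PJordan.Fp_one hp
  have hP1 : (1:ℝ) < pi_p p / 2 := by
    rw [← hP]; exact PJordan.lt_Fp hp one_pos le_rfl
  have hle : x ≤ y * (pi_p p / 2) := by
    rw [← hP, ← hFy]; exact PJordan.Fp_le hp hy0' hy1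
  constructor
  · rw [div_le_div_iff₀ (by linarith) hx0]
    nlinarith [hle, hy0', hP1]
  · rw [div_lt_one hx0]; exact hyx
end

section
/- For p ∈ (1,∞) and all real x ≠ 0 (with sin_p extended to ℝ as an odd 2π_p-periodic function), |sin_p(x)/x| ≤ 1, with strict inequality for all x ≠ 0. -/
/-! On `(0, 1)` the integrand `(1 - t^p)^(-1/p)` of `Fp p` exceeds `1`, so `y < Fp p y`; applied to
`y = sin_p z` this gives `sin_p z < z` on `(0, π_p/2]`. The odd extension reflected about `π_p/2` is
`π_p`-antiperiodic, hence `|sin_p| ≤ 1` everywhere, and `1 < π_p/2` because `sin (π/p) < π/p`. -/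

open Real

open Set

lemma one_lt_pi_p_div_two {p : ℝ} (hp : 1 < p) : 1 < pi_p p / 2 := by
  have hp0 : 0 < p := zero_lt_one.trans hp
  have hπp : 0 < π / p := div_pos pi_pos hp0
  have hsin_pos : 0 < Real.sin (π / p) :=
    sin_pos_of_pos_of_lt_pi hπp (div_lt_self pi_pos hp)
  have hsin_lt : p * Real.sin (π / p) < π := by
    simpa [mul_div_cancel₀ π hp0.ne'] using mul_lt_mul_of_pos_left (sin_lt hπp) hp0
  rw [pi_p, div_div, lt_div_iff₀ (by positivity)]
  linarith

lemma one_lt_Fp_integrand {p t : ℝ} (hp : 0 < p) (ht0 : 0 < t) (ht1 : t < 1) :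
    1 < (1 - t ^ p) ^ (-(1/p) : ℝ) := by
  have htp0 : 0 < t ^ p := rpow_pos_of_pos ht0 p
  have htp1 : t ^ p < 1 := rpow_lt_one ht0.le ht1 hp
  rw [one_lt_rpow_iff_of_pos (by linarith)]
  exact Or.inr ⟨by linarith, by simpa using hp⟩

/-- The positivity hypothesis rules out the junk value `Fp p y = 0` of a non-integrable integrand. -/
lemma lt_Fp_of_pos {p y : ℝ} (hp : 0 < p) (hy : y ≤ 1) (hF : 0 < Fp p y) : y < Fp p y := by
  rcases le_or_gt y 0 with hy0 | hy0
  · linarith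
  have hint : IntervalIntegrable (fun t => (1 - t ^ p) ^ (-(1/p) : ℝ)) MeasureTheory.volume 0 y := by
    by_contra h
    exact hF.ne' (intervalIntegral.integral_undef h)
  have hpos : 0 < ∫ t in (0:ℝ)..y, ((1 - t ^ p) ^ (-(1/p) : ℝ) - 1) :=
    intervalIntegral.intervalIntegral_pos_of_pos_on (hint.sub intervalIntegrable_const)
      (fun t ht => sub_pos.2 (one_lt_Fp_integrand hp ht.1 (ht.2.trans_le hy))) hy0
  rw [intervalIntegral.integral_sub hint intervalIntegrable_const] at hpos
  simpa [Fp] using hpos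

section OddReflected

variable {f : ℝ → ℝ} {P : ℝ}

lemma antiperiodic_of_odd_of_reflect (hodd : ∀ x, f (-x) = -f x)
    (hrefl : ∀ x, f (P - x) = f (P + x)) : Function.Antiperiodic f (2 * P) := fun x => by
  have h := hrefl (P + x)
  rw [show P - (P + x) = -x by ring, show P + (P + x) = x + 2 * P by ring, hodd] at h
  exact h.symm

lemma abs_le_of_odd_of_reflect {M : ℝ} (hP : 0 < P) (hodd : ∀ x, f (-x) = -f x)
    (hrefl : ∀ x, f (P - x) = f (P + x)) (hM : ∀ x ∈ Icc 0 P, |f x| ≤ M) (x : ℝ) :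
    |f x| ≤ M := by
  have habs : Function.Periodic (fun x => |f x|) (2 * P) := fun x => by
    simp only [antiperiodic_of_odd_of_reflect hodd hrefl x, abs_neg]
  obtain ⟨y, ⟨hy0, hy2P⟩, hxy⟩ := habs.exists_mem_Ico₀ (by linarith) x
  rw [hxy]
  rcases le_or_gt y P with hyP | hyP
  · exact hM y ⟨hy0, hyP⟩
  · have := hM (P - (y - P)) ⟨by linarith, by linarith⟩
    rwa [hrefl, add_sub_cancel] at this

lemma abs_lt_abs_of_odd (hodd : ∀ x, f (-x) = -f x) (hlt : ∀ z, 0 < z → |f z| < z)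
    {x : ℝ} (hx : x ≠ 0) : |f x| < |x| := by
  rcases hx.lt_or_gt with hx | hx
  · simpa [hodd, abs_of_neg hx] using hlt (-x) (neg_pos.2 hx)
  · simpa [abs_of_pos hx] using hlt x hx

end OddReflected

theorem abs_sincp_lt_one (p : ℝ) (hp : 1 < p) (sinp : ℝ → ℝ)
    (hbase : ∀ x ∈ Set.Icc 0 (pi_p p / 2),
      sinp x ∈ Set.Icc (0:ℝ) 1 ∧ Fp p (sinp x) = x)
    (hodd : ∀ x, sinp (-x) = - sinp x)
    (hrefl : ∀ x, sinp (pi_p p / 2 - x) = sinp (pi_p p / 2 + x))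
    (x : ℝ) (hx : x ≠ 0) :
    |sinp x / x| ≤ 1 ∧ |sinp x / x| < 1 := by
  have hP := one_lt_pi_p_div_two hp
  have hbound : ∀ z, |sinp z| ≤ 1 :=
    abs_le_of_odd_of_reflect (by linarith) hodd hrefl fun z hz => by
      obtain ⟨⟨h0, h1⟩, -⟩ := hbase z hz
      rwa [abs_of_nonneg h0]
  have hlt : ∀ z, 0 < z → |sinp z| < z := fun z hz => by
    rcases le_or_gt z (pi_p p / 2) with hzP | hzP
    · obtain ⟨⟨h0, h1⟩, hF⟩ := hbase z ⟨hz.le, hzP⟩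
      rw [abs_of_nonneg h0]
      have := lt_Fp_of_pos (by linarith) h1 (hF.symm ▸ hz)
      rwa [hF] at this
    · linarith [hbound z]
  have hlt_one : |sinp x / x| < 1 := by
    rw [abs_div, div_lt_one (abs_pos.2 hx)]
    exact abs_lt_abs_of_odd hodd hlt hx
  exact ⟨hlt_one.le, hlt_one⟩
end

section
/- For p ∈ (1,∞), the function x ↦ sin_p(x)/x is strictly decreasing on the interval (0, π_p/2). -/
open Real

namespace SincpAux

variable {p : ℝ}

noncomputable def g (p t : ℝ) : ℝ := (1 - t ^ p) ^ (-(1/p) : ℝ)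

lemma g_mono (hp : 1 < p) {s t : ℝ} (hs : 0 ≤ s) (hst : s ≤ t) (ht : t < 1) :
    g p s ≤ g p t := by
  have h1 : t ^ p < 1 := Real.rpow_lt_one (hs.trans hst) ht (by linarith)
  have h2 : s ^ p ≤ t ^ p := Real.rpow_le_rpow hs hst (by linarith)
  have h3 : (0:ℝ) < 1/p := by positivity
  exact Real.rpow_le_rpow_of_nonpos (by linarith) (by linarith) (by linarith)

lemma g_strict_mono (hp : 1 < p) {s t : ℝ} (hs : 0 ≤ s) (hst : s < t) (ht : t < 1) :
    g p s < g p t := by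
  have h1 : t ^ p < 1 := Real.rpow_lt_one (hs.trans hst.le) ht (by linarith)
  have h2 : s ^ p < t ^ p := Real.rpow_lt_rpow hs hst (by linarith)
  have h3 : (0:ℝ) < 1/p := by positivity
  exact Real.rpow_lt_rpow_of_neg (by linarith) (by linarith) (by linarith)

lemma g_pos (hp : 1 < p) {t : ℝ} (ht0 : 0 ≤ t) (ht1 : t < 1) : 0 < g p t := by
  have h1 : t ^ p < 1 := Real.rpow_lt_one ht0 ht1 (by linarith)
  exact Real.rpow_pos_of_pos (by linarith) _

lemma g_integrable (hp : 1 < p) {b : ℝ} (hb0 : 0 ≤ b) (hb1 : b ≤ 1) :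
    IntervalIntegrable (g p) MeasureTheory.volume 0 b := by
  have hr : (-1 : ℝ) < -(1/p) := by
    have h1 : 1/p < 1 := by rw [div_lt_one (by linarith)]; linarith
    linarith
  have hmaj : IntervalIntegrable (fun t : ℝ => (1 - t) ^ (-(1/p) : ℝ))
      MeasureTheory.volume 0 1 := by
    have := ((intervalIntegral.intervalIntegrable_rpow' (a := 0) (b := 1) hr).comp_sub_left
      1).symm
    simpa using this
  have h01 : IntervalIntegrable (g p) MeasureTheory.volume 0 1 := by
    rw [intervalIntegrable_iff_integrableOn_Ioc_of_le (by norm_num)] at hmaj ⊢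
    refine MeasureTheory.Integrable.mono hmaj ?_ ?_
    · apply Measurable.aestronglyMeasurable
      unfold g
      fun_prop
    · refine MeasureTheory.ae_restrict_of_forall_mem measurableSet_Ioc ?_
      intro t ht
      rcases eq_or_lt_of_le ht.2 with h1 | h1
      · have hne : -(1/p) ≠ (0:ℝ) := by
          have : (0:ℝ) < 1/p := by positivity
          intro h; simp only [neg_eq_zero] at h; linarith
        simp only [g, h1, Real.one_rpow, sub_self, Real.zero_rpow hne]
        simp
      · have ht0 : 0 < t := ht.1
        have htp : t ^ p ≤ t := by
          have := Real.rpow_le_rpow_of_exponent_ge ht0 h1.le (le_of_lt hp)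
          simpa [Real.rpow_one] using this
        have h1t : (0:ℝ) < 1 - t := by linarith
        have hle : g p t ≤ (1 - t) ^ (-(1/p) : ℝ) :=
          Real.rpow_le_rpow_of_nonpos h1t (by linarith)
            (neg_nonpos.mpr (by positivity))
        have hg0 : 0 ≤ g p t := (g_pos hp ht0.le (by linarith)).le
        have hm0 : 0 ≤ (1 - t) ^ (-(1/p) : ℝ) := Real.rpow_nonneg h1t.le _
        simp only [Real.norm_eq_abs, abs_of_nonneg hg0, abs_of_nonneg hm0]
        exact hle
  refine h01.mono_set ?_
  rw [Set.uIcc_of_le hb0, Set.uIcc_of_le (by norm_num : (0:ℝ) ≤ 1)]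
  exact Set.Icc_subset_Icc le_rfl hb1

lemma Fp_eq (p b : ℝ) : Fp p b = ∫ t in (0:ℝ)..b, g p t := rfl

lemma Fp_strictMono (hp : 1 < p) {a b : ℝ} (ha : 0 ≤ a) (hab : a < b) (hb : b ≤ 1) :
    Fp p a < Fp p b := by
  have hia := g_integrable hp ha (le_of_lt (lt_of_lt_of_le hab hb))
  have hib := g_integrable hp (ha.trans hab.le) hb
  have hsub : Fp p b - Fp p a = ∫ t in a..b, g p t :=
    intervalIntegral.integral_interval_sub_left hib hia
  have hpos : 0 < ∫ t in a..b, g p t := by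
    refine intervalIntegral.intervalIntegral_pos_of_pos_on (hia.symm.trans hib) ?_ hab
    intro t ht
    exact g_pos hp (ha.trans ht.1.le) (lt_of_lt_of_le ht.2 hb)
  linarith

lemma key (hp : 1 < p) {a b : ℝ} (ha : 0 < a) (hab : a < b) (hb : b ≤ 1) :
    b * Fp p a < a * Fp p b := by
  have ha1 : a < 1 := lt_of_lt_of_le hab hb
  have hia := g_integrable hp ha.le ha1.le
  have hib := g_integrable hp (ha.le.trans hab.le) hb
  have hiab : IntervalIntegrable (g p) MeasureTheory.volume a b := hia.symm.trans hib
  have hFa : Fp p a ≤ a * g p a := by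
    have hmono := intervalIntegral.integral_mono_on (μ := MeasureTheory.volume)
      (f := g p) (g := fun _ => g p a) ha.le hia intervalIntegrable_const
      (fun t ht => g_mono hp ht.1 ht.2 ha1)
    rw [Fp_eq]
    calc (∫ t in (0:ℝ)..a, g p t) ≤ ∫ _t in (0:ℝ)..a, g p a := hmono
      _ = a * g p a := by simp [mul_comm]
  have hInt : (b - a) * g p a < ∫ t in a..b, g p t := by
    have hpos : 0 < ∫ t in a..b, (g p t - g p a) := by
      refine intervalIntegral.intervalIntegral_pos_of_pos_on
        (hiab.sub intervalIntegrable_const) ?_ hab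
      intro t ht
      have := g_strict_mono hp ha.le ht.1 (lt_of_lt_of_le ht.2 hb)
      linarith
    have heq : (∫ t in a..b, (g p t - g p a))
        = (∫ t in a..b, g p t) - (b - a) * g p a := by
      rw [intervalIntegral.integral_sub hiab intervalIntegrable_const]
      simp [mul_comm]
    linarith
  have hsub : Fp p b - Fp p a = ∫ t in a..b, g p t :=
    intervalIntegral.integral_interval_sub_left hib hia
  have hga : 0 < g p a := g_pos hp ha.le ha1
  nlinarith

end SincpAux

theorem sincp_strictAnti (p : ℝ) (hp : 1 < p) (sinp : ℝ → ℝ)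
    (hsin : ∀ x ∈ Set.Icc 0 (pi_p p / 2),
      sinp x ∈ Set.Icc (0:ℝ) 1 ∧ Fp p (sinp x) = x) :
    StrictAntiOn (fun x => sinp x / x) (Set.Ioo 0 (pi_p p / 2)) := by
  intro x hx y hy hxy
  obtain ⟨hax, hFx⟩ := hsin x (Set.Ioo_subset_Icc_self hx)
  obtain ⟨hay, hFy⟩ := hsin y (Set.Ioo_subset_Icc_self hy)
  set a := sinp x with hadef
  set b := sinp y with hbdef
  have hx0 : 0 < x := hx.1
  have hy0 : 0 < y := hy.1
  have hF0 : Fp p 0 = 0 := by simp [Fp]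
  have ha0 : 0 < a := by
    rcases eq_or_lt_of_le hax.1 with h | h
    · rw [← h] at hFx; linarith [hF0 ▸ hFx]
    · exact h
  have hb0 : 0 < b := by
    rcases eq_or_lt_of_le hay.1 with h | h
    · rw [← h] at hFy; linarith [hF0 ▸ hFy]
    · exact h
  have hab : a < b := by
    rcases lt_trichotomy a b with h | h | h
    · exact h
    · rw [h, hFy] at hFx; linarith
    · have := SincpAux.Fp_strictMono hp hb0.le h hax.2
      rw [hFx, hFy] at this; linarith
  have hkey := SincpAux.key hp ha0 hab hay.2
  rw [hFx, hFy] at hkey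
  simp only
  rw [div_lt_div_iff₀ hy0 hx0]
  linarith
end

section
/- For every p ∈ (1,∞) and α > 0, lim_{q→∞} q^{1/p} ∫_α^∞ |sin_p(x)/x|^q dx = 0. -/
open Real Filter MeasureTheory

theorem tail_integral_tendsto_zero (p : ℝ) (hp : 1 < p)
    (sinp : ℝ → ℝ)
    (hbase : ∀ x ∈ Set.Icc 0 (pi_p p / 2),
      sinp x ∈ Set.Icc (0:ℝ) 1 ∧ Fp p (sinp x) = x)
    (hodd : ∀ x, sinp (-x) = - sinp x)
    (hrefl : ∀ x, sinp (pi_p p / 2 - x) = sinp (pi_p p / 2 + x))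
    (α : ℝ) (hα : 0 < α) :
    Tendsto (fun q : ℝ => q ^ (1/p : ℝ) * ∫ x in Set.Ioi α, |sinp x / x| ^ q)
      atTop (nhds 0) := by
  have hp0 : (0:ℝ) < p := by linarith
  have hπp : 0 < π / p := div_pos Real.pi_pos hp0
  have hsin : 0 < Real.sin (π / p) :=
    Real.sin_pos_of_pos_of_lt_pi hπp (div_lt_self Real.pi_pos hp)
  have hD : 0 < p * Real.sin (π / p) := mul_pos hp0 hsin
  have hDπ : p * Real.sin (π / p) < π := by
    have h1 := Real.sin_lt hπp
    have h2 : p * (π / p) = π := by field_simp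
    nlinarith
  have hP2 : 2 < pi_p p := by
    rw [pi_p, lt_div_iff₀ hD]; nlinarith
  set P := pi_p p with hPdef
  have hP0 : (0:ℝ) < P := by linarith
  -- symmetry consequences
  have hrefl2 : ∀ x, sinp (P - x) = sinp x := by
    intro x
    have h := hrefl (x - P/2)
    rw [show P/2 - (x - P/2) = P - x by ring, show P/2 + (x - P/2) = x by ring] at h
    exact h
  have habs : ∀ x, |sinp x| ≤ 1 := by
    have hper : Function.Periodic (fun x => |sinp x|) P := by
      intro x
      have h1 : sinp (x + P) = - sinp x := by
        have h := hrefl2 (-x)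
        rw [sub_neg_eq_add, hodd] at h
        rw [show x + P = P + x by ring, h]
      simp only [h1, abs_neg]
    have base : ∀ y ∈ Set.Icc 0 (P/2), |sinp y| ≤ 1 := by
      intro y hy
      obtain ⟨⟨h0, h1⟩, -⟩ := hbase y hy
      rw [abs_le]; constructor <;> linarith
    intro x
    obtain ⟨y, hy, hxy⟩ := hper.exists_mem_Ico₀ hP0 x
    rw [hxy]
    rcases le_or_gt y (P/2) with h | h
    · exact base y ⟨hy.1, h⟩
    · rw [← hrefl2 y]; exact base (P - y) ⟨by linarith [hy.2], by linarith⟩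
  -- constants
  set β : ℝ := min (α/2) (1/2) with hβdef
  have hβ0 : 0 < β := lt_min (by linarith) (by norm_num)
  set δ : ℝ := β ^ (p+1) / (p * (p+1)) with hδdef
  have hδ0 : 0 < δ := div_pos (Real.rpow_pos_of_pos hβ0 _) (by nlinarith)
  set c : ℝ := max (max (1/2) (2/P)) (1 - 2*δ/P) with hcdef
  have hc0 : 0 < c :=
    lt_of_lt_of_le (by norm_num) (le_trans (le_max_left _ _) (le_max_left _ _))
  have hc1 : c < 1 := by
    apply max_lt (max_lt (by norm_num) ?_) ?_
    · rw [div_lt_one hP0]; linarith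
    · have h : 0 < 2*δ/P := by positivity
      linarith
  -- lower bound for Fp
  have hFp : ∀ y : ℝ, β ≤ y → y ≤ 1 → Fp p y = 0 ∨ y + δ ≤ Fp p y := by
    intro y hβy hy1
    have hy0 : 0 ≤ y := le_trans hβ0.le hβy
    by_cases hInt : IntervalIntegrable (fun t => (1 - t ^ p) ^ (-(1/p) : ℝ)) volume 0 y
    · right
      have hg_int : IntervalIntegrable (fun t => 1 + t ^ p / p) volume 0 y := by
        exact IntervalIntegrable.add intervalIntegrable_const
          ((intervalIntegral.intervalIntegrable_rpow' (by linarith)).div_const p)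
      have hle : (fun t => 1 + t ^ p / p)
          ≤ᵐ[volume.restrict (Set.Icc 0 y)] (fun t => (1 - t ^ p) ^ (-(1/p) : ℝ)) := by
        have h1 : ∀ᵐ t ∂(volume.restrict (Set.Icc 0 y)), t ≠ 1 := by
          refine ae_restrict_of_ae ?_
          rw [ae_iff, show {t : ℝ | ¬ t ≠ 1} = {1} by ext t; simp]
          exact measure_singleton 1
        have h2 := ae_restrict_mem (μ := volume) (measurableSet_Icc (a := (0:ℝ)) (b := y))
        filter_upwards [h1, h2] with t ht1 ht2
        have ht0 : 0 ≤ t := ht2.1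
        have htl : t < 1 := lt_of_le_of_ne (le_trans ht2.2 hy1) ht1
        set u : ℝ := t ^ p with hudef
        have hu0 : 0 ≤ u := Real.rpow_nonneg ht0 p
        have hu1 : u < 1 := by
          rcases eq_or_lt_of_le ht0 with h | h
          · rw [hudef, ← h, Real.zero_rpow (by linarith : p ≠ 0)]; norm_num
          · exact Real.rpow_lt_one ht0 htl hp0
        have hup : u / p < 1 := by
          rw [div_lt_one hp0]; linarith
        have hA : (1 - u) ^ ((1:ℝ)/p) ≤ 1 - u/p := by
          have h := rpow_one_add_le_one_add_mul_self (s := -u) (by linarith)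
            (p := 1/p) (by positivity) (by rw [div_le_one hp0]; linarith)
          rw [show (1:ℝ) + -u = 1 - u by ring] at h
          calc (1 - u) ^ ((1:ℝ)/p) ≤ 1 + 1/p * -u := h
            _ = 1 - u/p := by ring
        have hv0 : 0 < (1 - u) ^ ((1:ℝ)/p) := Real.rpow_pos_of_pos (by linarith) _
        have hkey : 1 + u/p ≤ (1 - u) ^ (-(1/p) : ℝ) := by
          rw [show (-(1/p) : ℝ) = -(1/p) by rfl, Real.rpow_neg (by linarith : (0:ℝ) ≤ 1 - u)]
          rw [le_inv_comm₀ (by positivity) hv0]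
          calc (1 - u) ^ ((1:ℝ)/p) ≤ 1 - u/p := hA
            _ ≤ (1 + u/p)⁻¹ := by
                rw [inv_eq_one_div, le_div_iff₀ (by positivity)]
                nlinarith [sq_nonneg (u/p)]
        simpa using hkey
      have hmono := intervalIntegral.integral_mono_ae_restrict hy0 hg_int hInt hle
      have hval : (∫ t in (0:ℝ)..y, (1 + t ^ p / p)) = y + y^(p+1) / (p+1) / p := by
        rw [intervalIntegral.integral_add intervalIntegrable_const
          ((intervalIntegral.intervalIntegrable_rpow' (by linarith)).div_const p),
          intervalIntegral.integral_div, integral_rpow (Or.inl (by linarith)),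
          intervalIntegral.integral_const, Real.zero_rpow (by linarith : p + 1 ≠ 0)]
        simp
      have hδle : δ ≤ y^(p+1) / (p+1) / p := by
        have hββ : β ^ (p+1) ≤ y ^ (p+1) := Real.rpow_le_rpow hβ0.le hβy (by linarith)
        rw [hδdef, show β^(p+1) / (p * (p+1)) = β^(p+1) / ((p+1) * p) by rw [mul_comm],
          show y^(p+1) / (p+1) / p = y^(p+1) / ((p+1) * p) by rw [div_div]]
        gcongr
      rw [Fp]
      rw [hval] at hmono
      linarith
    · left
      rw [Fp]
      exact intervalIntegral.integral_undef hInt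
  -- ratio bound
  have hrb : ∀ x, α ≤ x → |sinp x / x| ≤ c := by
    intro x hx
    have hx0 : 0 < x := lt_of_lt_of_le hα hx
    rw [abs_div, abs_of_pos hx0, div_le_iff₀ hx0]
    rcases le_or_gt x (P/2) with hxP | hxP
    · obtain ⟨⟨hs0, hs1⟩, hFx⟩ := hbase x ⟨hx0.le, hxP⟩
      rw [abs_of_nonneg hs0]
      rcases le_or_gt (sinp x) (x/2) with h2 | h2
      · have hch : (1/2:ℝ) ≤ c := le_trans (le_max_left _ _) (le_max_left _ _)
        have h7 : (1/2:ℝ) * x ≤ c * x := mul_le_mul_of_nonneg_right hch hx0.le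
        linarith
      · have hsβ : β ≤ sinp x := by
          have h3 : β ≤ α/2 := min_le_left _ _
          linarith
        rcases hFp (sinp x) hsβ hs1 with h0 | h0
        · rw [hFx] at h0; linarith
        · rw [hFx] at h0
          have hcge : 1 - 2*δ/P ≤ c := le_max_right _ _
          have h4 : 2*δ/P * x ≤ δ := by
            rw [div_mul_eq_mul_div, div_le_iff₀ hP0]
            nlinarith
          have h7 : (1 - 2*δ/P) * x ≤ c * x := mul_le_mul_of_nonneg_right hcge hx0.le
          have h8 : (1 - 2*δ/P) * x = x - 2*δ/P * x := by ring
          linarith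
    · have h1 := habs x
      have hc2 : 2/P ≤ c := le_trans (le_max_right _ _) (le_max_left _ _)
      have h6 : (1:ℝ) ≤ 2/P * x := by
        rw [div_mul_eq_mul_div, le_div_iff₀ hP0]; linarith
      have h7 : 2/P * x ≤ c * x := mul_le_mul_of_nonneg_right hc2 hx0.le
      linarith
  -- pointwise power bound
  have hpw : ∀ q : ℝ, 2 ≤ q → ∀ x, x ∈ Set.Ioi α →
      |sinp x / x| ^ q ≤ c ^ (q - 2) * x ^ (-2 : ℝ) := by
    intro q hq x hx
    have hx0 : 0 < x := lt_trans hα hx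
    have hr0 : 0 ≤ |sinp x / x| := abs_nonneg _
    have hrc : |sinp x / x| ≤ c := hrb x (le_of_lt hx)
    have hrx : |sinp x / x| ≤ 1/x := by
      rw [abs_div, abs_of_pos hx0]
      gcongr
      exact habs x
    rcases eq_or_lt_of_le hr0 with h | h
    · rw [← h, Real.zero_rpow (by linarith : q ≠ 0)]
      positivity
    · have heq : |sinp x / x| ^ q = |sinp x / x| ^ (q-2) * |sinp x / x| ^ (2:ℝ) := by
        rw [← Real.rpow_add h]; congr 1; ring
      rw [heq]
      apply mul_le_mul
      · exact Real.rpow_le_rpow hr0 hrc (by linarith)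
      · calc |sinp x / x| ^ (2:ℝ) ≤ (1/x) ^ (2:ℝ) :=
              Real.rpow_le_rpow hr0 hrx (by norm_num)
          _ = x ^ (-2:ℝ) := by
              rw [one_div, Real.inv_rpow hx0.le, ← Real.rpow_neg hx0.le]
      · positivity
      · positivity
  -- integral bound
  set I : ℝ := ∫ x in Set.Ioi α, x ^ (-2:ℝ) with hIdef
  have hIb : ∀ q : ℝ, 2 ≤ q →
      (∫ x in Set.Ioi α, |sinp x / x| ^ q) ≤ c ^ (q - 2) * I := by
    intro q hq
    have hgi : IntegrableOn (fun x : ℝ => c ^ (q-2) * x ^ (-2:ℝ)) (Set.Ioi α) :=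
      (integrableOn_Ioi_rpow_of_lt (by norm_num) hα).const_mul _
    have h := integral_mono_of_nonneg (μ := volume.restrict (Set.Ioi α))
      (f := fun x => |sinp x / x| ^ q) (g := fun x => c ^ (q-2) * x ^ (-2:ℝ))
      (ae_of_all _ (fun x => Real.rpow_nonneg (abs_nonneg _) _)) hgi ?_
    · rwa [integral_const_mul] at h
    · filter_upwards [ae_restrict_mem measurableSet_Ioi] with x hx
      exact hpw q hq x hx
  -- majorant tends to zero
  have hlogc : 0 < -Real.log c := by
    have := Real.log_neg hc0 hc1
    linarith
  have hT : Tendsto (fun q : ℝ => q ^ (1/p:ℝ) * (c ^ (q-2) * I)) atTop (nhds 0) := by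
    have h1 := tendsto_rpow_mul_exp_neg_mul_atTop_nhds_zero (1/p) (-Real.log c) hlogc
    have h2 := h1.const_mul (c ^ (-2:ℝ) * I)
    rw [mul_zero] at h2
    apply h2.congr
    intro q
    have hcq : c ^ (q - 2) = Real.exp (-(-Real.log c) * q) * c ^ (-2:ℝ) := by
      calc c ^ (q - 2) = c ^ q * c ^ (-2:ℝ) := by
            rw [show q - 2 = q + (-2:ℝ) by ring, Real.rpow_add hc0]
        _ = Real.exp (-(-Real.log c) * q) * c ^ (-2:ℝ) := by
            rw [Real.rpow_def_of_pos hc0, neg_neg]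
    rw [hcq]; ring
  -- squeeze
  apply squeeze_zero' ?_ ?_ hT
  · filter_upwards [eventually_ge_atTop (2:ℝ)] with q hq
    exact mul_nonneg (Real.rpow_nonneg (by linarith) _)
      (setIntegral_nonneg measurableSet_Ioi
        (fun x _ => Real.rpow_nonneg (abs_nonneg _) _))
  · filter_upwards [eventually_ge_atTop (2:ℝ)] with q hq
    exact mul_le_mul_of_nonneg_left (hIb q hq) (Real.rpow_nonneg (by linarith) _)
end

section
/- For p ∈ (1,∞) and 0 < x < (1 - (2/π_p)^{p(p+1)})^{1/p}, the inequality x / sin_p^{-1}(x) > (1 - x^p)^{1/(p(p+1))} holds, where sin_p^{-1} = F_p. -/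
/-!
Put `a = 1/(p(p+1))` and `g(y) = y (1 - y^p)^(-a) - F_p(y)`, so that `g(0) = 0`.
With `v = 1 - y^p` and `s = p/(p+1)` one finds `g'(y) = v^(-a-1) (s v + (1 - s) - v^s)`,
which is positive on `(0,1)` by Bernoulli's inequality `v^s < 1 + s (v - 1)`.
Hence `F_p(x) < x (1 - x^p)^(-a)` for every `x ∈ (0,1)`, which is the claim after dividing
by `F_p(x) > 0`.
-/

open Real

open Set

theorem two_lt_pi_p {p : ℝ} (hp : 1 < p) : 2 < pi_p p := by
  have hp0 : 0 < p := one_pos.trans hp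
  have hθ : 0 < π / p := div_pos pi_pos hp0
  have hθπ : π / p < π := div_lt_self pi_pos hp
  have hsin : 0 < p * Real.sin (π / p) := mul_pos hp0 (sin_pos_of_pos_of_lt_pi hθ hθπ)
  have hlt : p * Real.sin (π / p) < π :=
    calc p * Real.sin (π / p) < p * (π / p) := mul_lt_mul_of_pos_left (sin_lt hθ) hp0
      _ = π := mul_div_cancel₀ π hp0.ne'
  rw [pi_p, lt_div_iff₀ hsin]
  linarith

theorem one_sub_rpow_pos {p t : ℝ} (hp : 0 < p) (ht : t ∈ Ico (0 : ℝ) 1) : 0 < 1 - t ^ p :=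
  sub_pos.2 (rpow_lt_one ht.1 ht.2 hp)

theorem continuousAt_one_sub_rpow_rpow {p q t : ℝ} (hp : 0 ≤ p) (ht : 1 - t ^ p ≠ 0) :
    ContinuousAt (fun u : ℝ => (1 - u ^ p) ^ q) t :=
  (continuousAt_const.sub (continuousAt_rpow_const t p (Or.inr hp))).rpow_const (Or.inl ht)

theorem intervalIntegrable_Fp_integrand {p y : ℝ} (hp : 0 < p) (hy : y ∈ Ico (0 : ℝ) 1) :
    IntervalIntegrable (fun t : ℝ => (1 - t ^ p) ^ (-(1/p) : ℝ)) MeasureTheory.volume 0 y := by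
  refine ContinuousOn.intervalIntegrable fun t ht => ?_
  rw [uIcc_of_le hy.1] at ht
  exact (continuousAt_one_sub_rpow_rpow hp.le
    (one_sub_rpow_pos hp ⟨ht.1, ht.2.trans_lt hy.2⟩).ne').continuousWithinAt

theorem hasDerivAt_Fp {p y : ℝ} (hp : 0 < p) (hy : y ∈ Ico (0 : ℝ) 1) :
    HasDerivAt (Fp p) ((1 - y ^ p) ^ (-(1/p) : ℝ)) y := by
  have hmeas : Measurable fun t : ℝ => (1 - t ^ p) ^ (-(1/p) : ℝ) := by fun_prop
  exact intervalIntegral.integral_hasDerivAt_right (intervalIntegrable_Fp_integrand hp hy)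
    hmeas.aestronglyMeasurable.stronglyMeasurableAtFilter
    (continuousAt_one_sub_rpow_rpow hp.le (one_sub_rpow_pos hp hy).ne')

theorem Fp_pos {p x : ℝ} (hp : 0 < p) (hx0 : 0 < x) (hx1 : x < 1) : 0 < Fp p x :=
  intervalIntegral.intervalIntegral_pos_of_pos_on
    (intervalIntegrable_Fp_integrand hp ⟨hx0.le, hx1⟩)
    (fun _ ht => rpow_pos_of_pos (one_sub_rpow_pos hp ⟨ht.1.le, ht.2.trans hx1⟩) _) hx0

theorem hasDerivAt_mul_one_sub_rpow_rpow {p b y : ℝ} (hy : 0 < y) (hv : 0 < 1 - y ^ p) :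
    HasDerivAt (fun y : ℝ => y * (1 - y ^ p) ^ (-b))
      ((1 - y ^ p) ^ (-b - 1) * (1 - y ^ p + b * p * y ^ p)) y := by
  have hbase : HasDerivAt (fun y : ℝ => 1 - y ^ p) (-(p * y ^ (p - 1))) y := by
    simpa using (hasDerivAt_rpow_const (p := p) (Or.inl hy.ne')).const_sub 1
  refine ((hasDerivAt_id' y).mul (hbase.rpow_const (p := -b) (Or.inl hv.ne'))).congr_deriv ?_
  rw [rpow_sub_one hv.ne', rpow_sub_one hy.ne']
  field_simp

theorem rpow_neg_one_div_lt_rpow_mul_add {p v : ℝ} (hp : 0 < p) (hv0 : 0 < v) (hv1 : v < 1) :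
    v ^ (-(1/p)) < v ^ (-(1 / (p * (p + 1))) - 1) * (v + 1 / (p * (p + 1)) * p * (1 - v)) := by
  set s := p / (p + 1) with hs
  have hs1 : s < 1 := (div_lt_one (by linarith)).2 (lt_add_one p)
  have hsplit : v ^ (-(1/p)) = v ^ (-(1 / (p * (p + 1))) - 1) * v ^ s := by
    rw [← rpow_add hv0, hs]
    congr 1
    field_simp
    ring
  have hbernoulli : v ^ s < 1 + s * (v - 1) := by
    simpa using rpow_one_add_lt_one_add_mul_self (s := v - 1) (by linarith) (by linarith)
      (by positivity) hs1
  have hweights : 1 + s * (v - 1) = v + 1 / (p * (p + 1)) * p * (1 - v) := by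
    rw [hs]
    field_simp
    ring
  rw [hsplit, ← hweights]
  exact mul_lt_mul_of_pos_left hbernoulli (rpow_pos_of_pos hv0 _)

theorem Fp_lt_mul_one_sub_rpow {p x : ℝ} (hp : 0 < p) (hx0 : 0 < x) (hx1 : x < 1) :
    Fp p x < x * (1 - x ^ p) ^ (-(1 / (p * (p + 1)))) := by
  set a := 1 / (p * (p + 1))
  set g : ℝ → ℝ := fun y => y * (1 - y ^ p) ^ (-a) - Fp p y
  have hcont : ContinuousOn g (Ico 0 1) := fun y hy =>
    ((continuousAt_id.mul (continuousAt_one_sub_rpow_rpow hp.le (one_sub_rpow_pos hp hy).ne')).sub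
      (hasDerivAt_Fp hp hy).continuousAt).continuousWithinAt
  set g' : ℝ → ℝ := fun y =>
    (1 - y ^ p) ^ (-a - 1) * (1 - y ^ p + a * p * y ^ p) - (1 - y ^ p) ^ (-(1/p))
  have hderiv : ∀ y ∈ Ioo (0 : ℝ) 1, HasDerivAt g (g' y) y := fun y hy =>
    (hasDerivAt_mul_one_sub_rpow_rpow hy.1 (one_sub_rpow_pos hp (Ioo_subset_Ico_self hy))).sub
      (hasDerivAt_Fp hp (Ioo_subset_Ico_self hy))
  have hmono : StrictMonoOn g (Ico 0 1) := by
    refine strictMonoOn_of_hasDerivWithinAt_pos (f' := g') (convex_Ico 0 1) hcont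
      (fun y hy => ?_) fun y hy => ?_
    all_goals rw [interior_Ico] at hy
    · exact (hderiv y hy).hasDerivWithinAt
    have hv1 : 1 - y ^ p < 1 := sub_lt_self 1 (rpow_pos_of_pos hy.1 p)
    simpa only [g', sub_pos, sub_sub_cancel] using
      rpow_neg_one_div_lt_rpow_mul_add hp (one_sub_rpow_pos hp (Ioo_subset_Ico_self hy)) hv1
  have hg0 : g 0 = 0 := by simp [g, Fp]
  have hgx : g 0 < g x := hmono ⟨le_rfl, one_pos⟩ ⟨hx0.le, hx1⟩ hx0
  simpa only [hg0, g, sub_pos] using hgx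

theorem arcsinp_lower_bound (p : ℝ) (hp : 1 < p) (x : ℝ) (hx0 : 0 < x)
    (hx1 : x < (1 - (2 / pi_p p) ^ (p * (p + 1))) ^ (1/p : ℝ)) :
    (1 - x ^ p) ^ (1 / (p * (p + 1)) : ℝ) < x / Fp p x := by
  have hp0 : 0 < p := one_pos.trans hp
  have hx_lt_one : x < 1 := by
    have hπ := two_lt_pi_p hp
    have hq0 : 0 ≤ 2 / pi_p p := by positivity
    have hq1 : 2 / pi_p p ≤ 1 := (div_le_one (by linarith)).2 hπ.le
    refine hx1.trans_le (rpow_le_one ?_ ?_ (by positivity))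
    · linarith [rpow_le_one hq0 hq1 (by positivity : 0 ≤ p * (p + 1))]
    · linarith [rpow_nonneg hq0 (p * (p + 1))]
  have hv : 0 < 1 - x ^ p := one_sub_rpow_pos hp0 ⟨hx0.le, hx_lt_one⟩
  rw [lt_div_iff₀ (Fp_pos hp0 hx0 hx_lt_one)]
  calc (1 - x ^ p) ^ (1 / (p * (p + 1))) * Fp p x
      < (1 - x ^ p) ^ (1 / (p * (p + 1))) * (x * (1 - x ^ p) ^ (-(1 / (p * (p + 1))))) := by
        gcongr
        exact Fp_lt_mul_one_sub_rpow hp0 hx0 hx_lt_one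
    _ = x := by
        rw [rpow_neg hv.le]
        field_simp
end

section
/- For p ∈ (1,∞) and x ∈ (0,1), x / sin_p^{-1}(x) < (1 + x^p/(p(p+1)))^{-1}, where sin_p^{-1} = F_p. -/
open Real

lemma key_pointwise (p u : ℝ) (hp : 1 < p) (hu0 : 0 < u) (hu1 : u < 1) :
    1 + u / p < (1 - u) ^ (-(1/p) : ℝ) := by
  have hp0 : (0:ℝ) < p := by linarith
  have h1u : (0:ℝ) < 1 - u := by linarith
  have hb : (1 - u) ^ ((1:ℝ)/p) ≤ 1 - (1/p) * u := by
    have h := rpow_one_add_le_one_add_mul_self (s := -u) (by linarith) (p := 1/p)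
      (by positivity) (by rw [div_le_one hp0]; linarith)
    have : (1:ℝ) + -u = 1 - u := by ring
    rw [this] at h
    linarith [h]
  have hpos : (0:ℝ) < (1-u) ^ ((1:ℝ)/p) := Real.rpow_pos_of_pos h1u _
  have hup : 0 < u / p := by positivity
  have hlt : (1 + u/p) * (1-u) ^ ((1:ℝ)/p) < 1 := by
    calc (1 + u/p) * (1-u) ^ ((1:ℝ)/p) ≤ (1 + u/p) * (1 - (1/p)*u) :=
          mul_le_mul_of_nonneg_left hb (by positivity)
      _ = 1 - (u/p)^2 := by ring
      _ < 1 := by nlinarith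
  rw [Real.rpow_neg h1u.le, inv_eq_one_div, lt_div_iff₀ hpos]
  linarith

theorem arcsinp_upper_bound (p : ℝ) (hp : 1 < p) (x : ℝ) (hx0 : 0 < x) (hx1 : x < 1) :
    x / Fp p x < (1 + x ^ p / (p * (p + 1)))⁻¹ := by
  have hp0 : (0:ℝ) < p := by linarith
  have hp1 : (0:ℝ) < p + 1 := by linarith
  -- positivity of 1 - t^p on [0,x]
  have htp : ∀ t ∈ Set.Icc (0:ℝ) x, 0 < 1 - t ^ p := by
    intro t ht
    have h1 : t ^ p ≤ x ^ p := Real.rpow_le_rpow ht.1 ht.2 hp0.le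
    have h2 : x ^ p < 1 := Real.rpow_lt_one hx0.le hx1 hp0
    linarith
  -- continuity of t ↦ t^p on ℝ≥0 points
  have hcpow : ∀ t : ℝ, ContinuousAt (fun s : ℝ => s ^ p) t := fun t =>
    Real.continuousAt_rpow_const t p (Or.inr hp0.le)
  have hg : ContinuousOn (fun t : ℝ => 1 + t ^ p / p) (Set.Icc 0 x) := by
    intro t _
    exact (continuousAt_const.add ((hcpow t).div_const p)).continuousWithinAt
  have hf : ContinuousOn (fun t : ℝ => (1 - t ^ p) ^ (-(1/p) : ℝ)) (Set.Icc 0 x) := by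
    intro t ht
    exact ((continuousAt_const.sub (hcpow t)).rpow_const
      (Or.inl (htp t ht).ne')).continuousWithinAt
  -- strict integral inequality
  have hint : (∫ t in (0:ℝ)..x, (1 + t ^ p / p)) < Fp p x := by
    apply intervalIntegral.integral_lt_integral_of_continuousOn_of_le_of_exists_lt hx0 hg hf
    · intro t ht
      have ht0 : 0 < t ^ p := Real.rpow_pos_of_pos ht.1 p
      have ht1 : t ^ p < 1 := by
        have := htp t ⟨ht.1.le, ht.2⟩; linarith
      exact (key_pointwise p (t ^ p) hp ht0 ht1).le
    · refine ⟨x, ⟨hx0.le, le_refl x⟩, ?_⟩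
      have ht0 : 0 < x ^ p := Real.rpow_pos_of_pos hx0 p
      have ht1 : x ^ p < 1 := Real.rpow_lt_one hx0.le hx1 hp0
      exact key_pointwise p (x ^ p) hp ht0 ht1
  -- compute the lower integral
  have hcomp : (∫ t in (0:ℝ)..x, (1 + t ^ p / p)) = x + x ^ (p+1) / (p+1) / p := by
    have hi1 : IntervalIntegrable (fun _ : ℝ => (1:ℝ)) MeasureTheory.volume 0 x :=
      intervalIntegrable_const
    have hi2 : IntervalIntegrable (fun t : ℝ => t ^ p / p) MeasureTheory.volume 0 x :=
      (intervalIntegral.intervalIntegrable_rpow (Or.inl hp0.le)).div_const p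
    rw [intervalIntegral.integral_add hi1 hi2, intervalIntegral.integral_div,
      integral_rpow (Or.inl (by linarith))]
    rw [Real.zero_rpow (by positivity : p + 1 ≠ 0)]
    simp
  have hxp1 : x ^ (p+1) = x ^ p * x := Real.rpow_add_one hx0.ne' p
  have hkey : x * (1 + x ^ p / (p * (p+1))) < Fp p x := by
    have h : x * (1 + x ^ p / (p * (p+1))) = x + x ^ (p+1) / (p+1) / p := by
      rw [hxp1]; field_simp
    rw [h, ← hcomp]; exact hint
  have hc : (0:ℝ) < 1 + x ^ p / (p * (p + 1)) := by
    have := Real.rpow_pos_of_pos hx0 p; positivity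
  have hF : 0 < Fp p x := lt_trans (by positivity) hkey
  rw [inv_eq_one_div, div_lt_div_iff₀ hF hc]
  linarith
end
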